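/- arXiv:2009.08045 — 4 statements merged into one kernel-verified Lean document; each statement's English description precedes it below -/
import Mathlib

section
/- There exists a unique vector δ* ∈ ℝ^{J−1} such that ms*_j(δ*) = ms_j for every j = 1,…,J−1; equivalently, the map T has a unique fixed point δ* ∈ ℝ^{J−1}, and at this fixed point the model-predicted market share of every one of the J options (including the outside option J) coincides with the observed share ms_j. -/
/-!
Write `w k l = P k l * exp (u l k)`. Uniqueness is a gross-substitutes argument: raising the
utilities of the other options lowers the share of an option whose own utility is fixed, and two
solutions are compared at the coordinate where their difference is maximal.

Existence is variational: `shares - ms` is the gradient of the potential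
`∑ k, d k * log (∑ l, w k l * exp (v l)) - ∑ l, ms l * v l`, which is coercive once the outside
utility is pinned at `0`, so its minimiser solves the share equations. Fixed points of `T` are the
solutions because `log` is injective, and the outside share matches because both share vectors
sum to one.
-/

open Finset Real Filter

section MixedLogit

variable {ι κ : Type*} [Fintype ι] [Fintype κ]

noncomputable def mixedLogitShare (d : κ → ℝ) (w : κ → ι → ℝ) (v : ι → ℝ) (j : ι) : ℝ :=
  ∑ k, d k * (w k j * exp (v j) / ∑ l, w k l * exp (v l))

noncomputable def mixedLogitPotential (d : κ → ℝ) (w : κ → ι → ℝ) (s v : ι → ℝ) : ℝ :=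
  ∑ k, d k * log (∑ l, w k l * exp (v l)) - ∑ l, s l * v l

variable {d : κ → ℝ} {w : κ → ι → ℝ}

lemma exists_pos_of_sum_eq_one (hd1 : ∑ k, d k = 1) : ∃ k, 0 < d k := by
  obtain ⟨k, -, hk⟩ := exists_lt_of_sum_lt (s := univ) (f := 0) (g := d) (by simp [hd1])
  exact ⟨k, hk⟩

lemma sum_mul_exp_pos [Nonempty ι] {a : ι → ℝ} (ha : ∀ l, 0 < a l) (v : ι → ℝ) :
    0 < ∑ l, a l * exp (v l) :=
  sum_pos (fun l _ => mul_pos (ha l) (exp_pos _)) univ_nonempty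

lemma mixedLogitShare_pos (hw : ∀ k l, 0 < w k l) (hd0 : ∀ k, 0 ≤ d k) (hd1 : ∑ k, d k = 1)
    (v : ι → ℝ) (j : ι) : 0 < mixedLogitShare d w v j := by
  have : Nonempty ι := ⟨j⟩
  have hshare (k) : 0 < w k j * exp (v j) / ∑ l, w k l * exp (v l) :=
    div_pos (mul_pos (hw k j) (exp_pos _)) (sum_mul_exp_pos (hw k) v)
  obtain ⟨k, hk⟩ := exists_pos_of_sum_eq_one hd1
  exact sum_pos' (fun k _ => mul_nonneg (hd0 k) (hshare k).le)
    ⟨k, mem_univ k, mul_pos hk (hshare k)⟩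

lemma sum_mixedLogitShare [Nonempty ι] (hw : ∀ k l, 0 < w k l) (hd1 : ∑ k, d k = 1)
    (v : ι → ℝ) : ∑ j, mixedLogitShare d w v j = 1 := by
  simp only [mixedLogitShare]
  rw [sum_comm, ← hd1]
  refine sum_congr rfl fun k _ => ?_
  rw [← mul_sum, ← sum_div, div_self (sum_mul_exp_pos (hw k) v).ne', mul_one]

lemma mixedLogitShare_add_const (v : ι → ℝ) (c : ℝ) :
    mixedLogitShare d w (fun l => v l + c) = mixedLogitShare d w v := by
  have (k) (l) : w k l * exp (v l + c) = w k l * exp (v l) * exp c := by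
    rw [exp_add, mul_assoc]
  ext j
  simp only [mixedLogitShare, this, ← sum_mul, mul_div_mul_right _ _ (exp_pos c).ne']

lemma mixedLogitShare_lt_of_le (hw : ∀ k l, 0 < w k l) (hd0 : ∀ k, 0 ≤ d k)
    (hd1 : ∑ k, d k = 1) {v v' : ι → ℝ} (hle : v ≤ v') {j₀ j₁ : ι} (heq : v j₀ = v' j₀)
    (hlt : v j₁ < v' j₁) : mixedLogitShare d w v' j₀ < mixedLogitShare d w v j₀ := by
  have : Nonempty ι := ⟨j₀⟩
  have hS (k) : ∑ l, w k l * exp (v l) < ∑ l, w k l * exp (v' l) :=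
    sum_lt_sum (fun l _ => mul_le_mul_of_nonneg_left (exp_le_exp.2 (hle l)) (hw k l).le)
      ⟨j₁, mem_univ _, mul_lt_mul_of_pos_left (exp_lt_exp.2 hlt) (hw k j₁)⟩
  have hshare (k) : w k j₀ * exp (v' j₀) / ∑ l, w k l * exp (v' l) <
      w k j₀ * exp (v j₀) / ∑ l, w k l * exp (v l) := by
    rw [heq]
    exact div_lt_div_of_pos_left (mul_pos (hw k j₀) (exp_pos _))
      (sum_mul_exp_pos (hw k) v) (hS k)
  obtain ⟨k, hk⟩ := exists_pos_of_sum_eq_one hd1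
  exact sum_lt_sum (fun k _ => mul_le_mul_of_nonneg_left (hshare k).le (hd0 k))
    ⟨k, mem_univ k, mul_lt_mul_of_pos_left (hshare k) hk⟩

/-- Shift `v'` up until it touches `v` from above at the maximiser `l₀` of `v - v'`; if the shift
`m` were positive, the share of `l₀` would be larger under `v` than under `v' + m`, hence `v'`. -/
lemma le_of_mixedLogitShare_eq (hw : ∀ k l, 0 < w k l) (hd0 : ∀ k, 0 ≤ d k)
    (hd1 : ∑ k, d k = 1) {v v' : ι → ℝ} {j₀ : ι} (h₀ : v j₀ = v' j₀)
    (hshare : ∀ j ≠ j₀, mixedLogitShare d w v j = mixedLogitShare d w v' j) : v ≤ v' := by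
  have : Nonempty ι := ⟨j₀⟩
  obtain ⟨l₀, hl₀⟩ := Finite.exists_max fun l => v l - v' l
  set m := v l₀ - v' l₀
  suffices hm : m ≤ 0 from fun l => by linarith [hl₀ l]
  by_contra! hm
  have hl₀ne : l₀ ≠ j₀ := by
    rintro rfl
    simp [m, h₀] at hm
  have hlt := mixedLogitShare_lt_of_le (d := d) hw hd0 hd1 (v := v) (v' := fun l => v' l + m)
    (fun l => by linarith [hl₀ l]) (j₀ := l₀) (by simp [m]) (j₁ := j₀) (by linarith)
  rw [mixedLogitShare_add_const, hshare l₀ hl₀ne] at hlt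
  exact lt_irrefl _ hlt

lemma eq_of_mixedLogitShare_eq (hw : ∀ k l, 0 < w k l) (hd0 : ∀ k, 0 ≤ d k)
    (hd1 : ∑ k, d k = 1) {v v' : ι → ℝ} {j₀ : ι} (h₀ : v j₀ = v' j₀)
    (hshare : ∀ j ≠ j₀, mixedLogitShare d w v j = mixedLogitShare d w v' j) : v = v' :=
  le_antisymm (le_of_mixedLogitShare_eq hw hd0 hd1 h₀ hshare)
    (le_of_mixedLogitShare_eq hw hd0 hd1 h₀.symm fun j hj => (hshare j hj).symm)

lemma continuous_mixedLogitPotential [Nonempty ι] (hw : ∀ k l, 0 < w k l) (s : ι → ℝ) :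
    Continuous (mixedLogitPotential d w s) := by
  have hS (k) : Continuous fun v : ι → ℝ => ∑ l, w k l * exp (v l) := by fun_prop
  unfold mixedLogitPotential
  refine .sub (continuous_finsetSum _ fun k _ => ?_) (by fun_prop)
  exact continuous_const.mul ((hS k).log fun v => (sum_mul_exp_pos (hw k) v).ne')

lemma hasDerivAt_mixedLogitPotential_update [DecidableEq ι] (hw : ∀ k l, 0 < w k l)
    (s v : ι → ℝ) (j : ι) :
    HasDerivAt (fun t => mixedLogitPotential d w s (Function.update v j t))
      (mixedLogitShare d w v j - s j) (v j) := by
  have : Nonempty ι := ⟨j⟩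
  have hv (l : ι) :
      HasDerivAt (fun t => Function.update v j t l) ((Pi.single j 1 : ι → ℝ) l) (v j) :=
    hasDerivAt_pi.1 (hasDerivAt_update v j (v j)) l
  have hS (k) : HasDerivAt (fun t => ∑ l, w k l * exp (Function.update v j t l))
      (w k j * exp (v j)) (v j) := by
    refine (HasDerivAt.fun_sum (u := univ) fun l _ => (hv l).exp.const_mul (w k l)).congr_deriv ?_
    simp [Pi.single_apply]
  have hlog (k) := ((hS k).log (by simpa using (sum_mul_exp_pos (hw k) v).ne')).const_mul (d k)
  refine ((HasDerivAt.fun_sum (u := univ) fun k _ => hlog k).sub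
    (HasDerivAt.fun_sum (u := univ) fun l _ => (hv l).const_mul (s l))).congr_deriv ?_
  simp [mixedLogitShare, Pi.single_apply, mul_div_assoc]

lemma le_mixedLogitPotential (hw : ∀ k l, 0 < w k l) (hd0 : ∀ k, 0 ≤ d k)
    (hd1 : ∑ k, d k = 1) {s : ι → ℝ} (hs0 : ∀ l, 0 ≤ s l) (hs1 : ∑ l, s l = 1) {c : ℝ}
    (hc : ∀ k l, c ≤ log (w k l)) (v : ι → ℝ) (i j : ι) :
    c + s j * (v i - v j) ≤ mixedLogitPotential d w s v := by
  set A := ∑ k, d k * log (∑ l, w k l * exp (v l)) - c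
  have hA (l) : v l ≤ A := by
    have hk (k) : c + v l ≤ log (∑ l', w k l' * exp (v l')) := calc
      c + v l ≤ log (w k l) + v l := by linarith [hc k l]
      _ = log (w k l * exp (v l)) := by rw [log_mul (hw k l).ne' (exp_pos _).ne', log_exp]
      _ ≤ _ := log_le_log (mul_pos (hw k l) (exp_pos _))
        (single_le_sum (fun l' _ => (mul_pos (hw k l') (exp_pos _)).le) (mem_univ l))
    have := calc c + v l = ∑ k, d k * (c + v l) := by rw [← sum_mul, hd1, one_mul]
      _ ≤ ∑ k, d k * log (∑ l', w k l' * exp (v l')) :=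
        sum_le_sum fun k _ => mul_le_mul_of_nonneg_left (hk k) (hd0 k)
    linarith
  have hpot : mixedLogitPotential d w s v - c = ∑ l, s l * (A - v l) := by
    simp only [mixedLogitPotential, A, mul_sub, sum_sub_distrib, ← sum_mul, hs1]
    ring
  have hj : s j * (A - v j) ≤ ∑ l, s l * (A - v l) :=
    single_le_sum (fun l _ => mul_nonneg (hs0 l) (sub_nonneg.2 (hA l))) (mem_univ j)
  nlinarith [mul_le_mul_of_nonneg_left (hA i) (hs0 j)]

end MixedLogit

section OutsideOption

variable {n : ℕ} {κ : Type*} [Fintype κ] {d : κ → ℝ} {w : κ → Fin (n + 1) → ℝ}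
  {s : Fin (n + 1) → ℝ}

/-- The potential is invariant under adding a constant to all utilities; pinning the outside
option at `0` removes that direction and leaves a potential growing linearly in `‖δ‖`. -/
lemma tendsto_mixedLogitPotential_snoc (hw : ∀ k l, 0 < w k l) (hd0 : ∀ k, 0 ≤ d k)
    (hd1 : ∑ k, d k = 1) (hs0 : ∀ l, 0 < s l) (hs1 : ∑ l, s l = 1) :
    Tendsto (fun δ : Fin n → ℝ => mixedLogitPotential d w s (Fin.snoc δ 0))
      (cocompact _) atTop := by
  obtain ⟨c, hc⟩ := (Set.finite_range fun kl : κ × Fin (n + 1) => log (w kl.1 kl.2)).bddBelow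
  obtain ⟨l₀, hl₀⟩ := Finite.exists_min s
  have hge := le_mixedLogitPotential hw hd0 hd1 (fun l => (hs0 l).le) hs1
    (c := c) (fun k l => hc ⟨(k, l), rfl⟩)
  have hnorm (δ : Fin n → ℝ) : s l₀ * ‖δ‖ ≤ mixedLogitPotential d w s (Fin.snoc δ 0) - c := by
    have hnonneg := hge (Fin.snoc δ 0) l₀ l₀
    rw [← le_div_iff₀' (hs0 l₀), pi_norm_le_iff_of_nonneg (div_nonneg (by linarith) (hs0 l₀).le)]
    intro i
    have hup := hge (Fin.snoc δ 0) i.castSucc (Fin.last n)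
    have hdown := hge (Fin.snoc δ 0) (Fin.last n) i.castSucc
    simp only [Fin.snoc_castSucc, Fin.snoc_last] at hup hdown
    rw [le_div_iff₀' (hs0 l₀), Real.norm_eq_abs]
    rcases abs_cases (δ i) with ⟨habs, hi⟩ | ⟨habs, hi⟩ <;> rw [habs]
    · nlinarith [hl₀ (Fin.last n)]
    · nlinarith [hl₀ i.castSucc]
  refine tendsto_atTop_mono (fun δ => ?_) (tendsto_atTop_add_const_right _ c
    (tendsto_norm_cocompact_atTop.const_mul_atTop (hs0 l₀)))
  linarith [hnorm δ]

lemma exists_mixedLogitShare_snoc_eq (hw : ∀ k l, 0 < w k l) (hd0 : ∀ k, 0 ≤ d k)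
    (hd1 : ∑ k, d k = 1) (hs0 : ∀ l, 0 < s l) (hs1 : ∑ l, s l = 1) :
    ∃ δ : Fin n → ℝ, ∀ j : Fin n,
      mixedLogitShare d w (Fin.snoc δ 0) j.castSucc = s j.castSucc := by
  obtain ⟨δ, hmin⟩ := ((continuous_mixedLogitPotential hw s).comp
    (continuous_id.finSnoc continuous_const)).exists_forall_le
    (tendsto_mixedLogitPotential_snoc hw hd0 hd1 hs0 hs1)
  refine ⟨δ, fun j => ?_⟩
  have hloc : IsLocalMin
      (fun t => mixedLogitPotential d w s (Function.update (Fin.snoc δ 0) j.castSucc t)) (δ j) :=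
    Eventually.of_forall fun t => by
      simpa [← Fin.snoc_update] using hmin (Function.update δ j t)
  have hderiv := hasDerivAt_mixedLogitPotential_update (d := d) hw s (Fin.snoc δ 0) j.castSucc
  rw [Fin.snoc_castSucc] at hderiv
  linarith [hloc.hasDerivAt_eq_zero hderiv]

end OutsideOption

theorem stmt_0_general
    (n K : ℕ)
    (d : Fin K → ℝ) (hd0 : ∀ k, 0 ≤ d k) (hd1 : ∑ k, d k = 1)
    (P : Fin K → Fin (n + 1) → ℝ)
    (hP0 : ∀ k j, 0 < P k j)
    (u : Fin (n + 1) → Fin K → ℝ)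
    (ms : Fin (n + 1) → ℝ) (hms0 : ∀ j, 0 < ms j) (hms1 : ∑ j, ms j = 1)
    (Pcond : (Fin n → ℝ) → Fin K → Fin (n + 1) → ℝ)
    (hPcond : ∀ δ k j, Pcond δ k j =
      P k j * Real.exp ((Fin.snoc δ 0 : Fin (n + 1) → ℝ) j + u j k) /
        ∑ l, P k l * Real.exp ((Fin.snoc δ 0 : Fin (n + 1) → ℝ) l + u l k))
    (msStar : (Fin n → ℝ) → Fin (n + 1) → ℝ)
    (hmsStar : ∀ δ j, msStar δ j = ∑ k, d k * Pcond δ k j)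
    (T : (Fin n → ℝ) → Fin n → ℝ)
    (hT : ∀ δ j, T δ j = δ j + Real.log (ms j.castSucc) - Real.log (msStar δ j.castSucc)) :
    (∃! δstar : Fin n → ℝ, ∀ j : Fin n, msStar δstar j.castSucc = ms j.castSucc) ∧
    (∃! δstar : Fin n → ℝ, T δstar = δstar) ∧
    (∀ δstar : Fin n → ℝ, T δstar = δstar →
      ∀ j : Fin (n + 1), msStar δstar j = ms j) := by
  set w : Fin K → Fin (n + 1) → ℝ := fun k l => P k l * exp (u l k)
  have hw : ∀ k l, 0 < w k l := fun k l => mul_pos (hP0 k l) (exp_pos _)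
  have hmsStar_eq (δ : Fin n → ℝ) : msStar δ = mixedLogitShare d w (Fin.snoc δ 0) := by
    ext j
    simp only [hmsStar, hPcond, mixedLogitShare, w, exp_add, mul_assoc, mul_comm (exp (u _ _))]
  have hfix_iff (δ : Fin n → ℝ) : T δ = δ ↔ ∀ j : Fin n, msStar δ j.castSucc = ms j.castSucc := by
    refine funext_iff.trans (forall_congr' fun j => ?_)
    rw [hT, add_sub_assoc, add_eq_left, sub_eq_zero, eq_comm, hmsStar_eq]
    exact log_injOn_pos.eq_iff (mixedLogitShare_pos hw hd0 hd1 _ _) (hms0 _)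
  have hsol : ∃! δ : Fin n → ℝ, ∀ j : Fin n, msStar δ j.castSucc = ms j.castSucc := by
    obtain ⟨δ, hδ⟩ := exists_mixedLogitShare_snoc_eq hw hd0 hd1 hms0 hms1
    refine ⟨δ, by simpa [hmsStar_eq] using hδ, fun δ' hδ' => ?_⟩
    have hsnoc := eq_of_mixedLogitShare_eq hw hd0 hd1 (v := Fin.snoc δ' 0) (v' := Fin.snoc δ 0)
      (j₀ := Fin.last n) (by simp) fun j hj => by
        obtain ⟨i, rfl⟩ := Fin.exists_castSucc_eq.2 hj
        rw [← hmsStar_eq, ← hmsStar_eq, hδ' i, hmsStar_eq, hδ i]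
    simpa using congrArg Fin.init hsnoc
  refine ⟨hsol, (existsUnique_congr hfix_iff).2 hsol, fun δ hδ j => ?_⟩
  have hinside := (hfix_iff δ).1 hδ
  induction j using Fin.lastCases with
  | cast i => exact hinside i
  | last =>
    have hsum : ∑ j, msStar δ j = 1 := by
      rw [hmsStar_eq]
      exact sum_mixedLogitShare hw hd1 _
    rw [Fin.sum_univ_castSucc] at hsum hms1
    simp only [hinside] at hsum
    linarith

/-- Lemma 2 of the paper (BLP-type inversion for the rational inattention discrete
choice model): there exists a unique `δ* ∈ ℝ^{J-1}` matching the predicted market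
shares of the inside goods to the observed ones; equivalently the map `T` has a
unique fixed point, and at any fixed point the predicted market share of every one
of the `J` options (including the outside option) coincides with the observed one. -/
theorem stmt_0
    (n K : ℕ) (hn : 1 ≤ n) (hK : 1 ≤ K)
    (d : Fin K → ℝ) (hd0 : ∀ k, 0 ≤ d k) (hd1 : ∑ k, d k = 1)
    (P : Fin K → Fin (n + 1) → ℝ)
    (hP0 : ∀ k j, 0 < P k j) (hP1 : ∀ k, ∑ j, P k j = 1)
    (u : Fin (n + 1) → Fin K → ℝ) (hu : ∀ k, u (Fin.last n) k = 0)
    (ms : Fin (n + 1) → ℝ) (hms0 : ∀ j, 0 < ms j) (hms1 : ∑ j, ms j = 1)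
    (Pcond : (Fin n → ℝ) → Fin K → Fin (n + 1) → ℝ)
    (hPcond : ∀ δ k j, Pcond δ k j =
      P k j * Real.exp ((Fin.snoc δ 0 : Fin (n + 1) → ℝ) j + u j k) /
        ∑ l, P k l * Real.exp ((Fin.snoc δ 0 : Fin (n + 1) → ℝ) l + u l k))
    (msStar : (Fin n → ℝ) → Fin (n + 1) → ℝ)
    (hmsStar : ∀ δ j, msStar δ j = ∑ k, d k * Pcond δ k j)
    (T : (Fin n → ℝ) → Fin n → ℝ)
    (hT : ∀ δ j, T δ j = δ j + Real.log (ms j.castSucc) - Real.log (msStar δ j.castSucc)) :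
    (∃! δstar : Fin n → ℝ, ∀ j : Fin n, msStar δstar j.castSucc = ms j.castSucc) ∧
    (∃! δstar : Fin n → ℝ, T δstar = δstar) ∧
    (∀ δstar : Fin n → ℝ, T δstar = δstar →
      ∀ j : Fin (n + 1), msStar δstar j = ms j) :=
  stmt_0_general n K d hd0 hd1 P hP0 u ms hms0 hms1 Pcond hPcond msStar hmsStar T hT
end

section
/- For every δ ∈ ℝ^{J−1} and every j ∈ {1,…,J−1}, the partial derivative of T_j with respect to δ_j exists and satisfies ∂T_j/∂δ_j(δ) = 1 − (1/ms*_j(δ)) · Σ_{k=1}^K d_k 𝒫^k_j(δ)(1 − 𝒫^k_j(δ)), and this quantity is nonnegative. -/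
/-!
Along the line `t ↦ update δ j t` only the `j`-th utility moves, and a logit probability
`p = 𝒫^k_j` then has derivative `p (1 - p)`. Hence `∂T_j/∂δ_j = 1 - (∑ d_k p_k (1 - p_k)) / ∑ d_k p_k`,
which is nonnegative because `p_k (1 - p_k) ≤ p_k`.
-/

open Real Finset Function

section Logit

variable {ι : Type*} [Fintype ι]

noncomputable def logitProb (a c x : ι → ℝ) (i : ι) : ℝ :=
  a i * exp (x i + c i) / ∑ l, a l * exp (x l + c l)

variable {a c : ι → ℝ}

lemma logitProb_pos (ha : ∀ l, 0 < a l) (x : ι → ℝ) (i : ι) : 0 < logitProb a c x i :=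
  div_pos (mul_pos (ha i) (exp_pos _)) <|
    sum_pos (fun l _ => mul_pos (ha l) (exp_pos _)) ⟨i, mem_univ i⟩

lemma hasDerivAt_logitProb_update [DecidableEq ι] (ha : ∀ l, 0 < a l) (x : ι → ℝ) (i : ι) :
    HasDerivAt (fun t => logitProb a c (update x i t) i)
      (logitProb a c x i * (1 - logitProb a c x i)) (x i) := by
  have hline : (fun t => logitProb a c (update x i t) i) =
      fun t => a i * exp (t + c i) / ∑ l, a l * exp (update x i t l + c l) := by
    funext t
    simp [logitProb]
  rw [hline]
  set N := a i * exp (x i + c i)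
  set M := ∑ l, a l * exp (x l + c l)
  have hM : 0 < M := sum_pos (fun l _ => mul_pos (ha l) (exp_pos _)) ⟨i, mem_univ i⟩
  have hnum : HasDerivAt (fun t => a i * exp (t + c i)) N (x i) := by
    simpa using (((hasDerivAt_id (x i)).add_const (c i)).exp).const_mul (a i)
  have hden : HasDerivAt (fun t => ∑ l, a l * exp (update x i t l + c l)) N (x i) := by
    have hsum : ∑ l, Pi.single (M := fun _ => ℝ) i N l = N := by simp
    rw [← hsum]
    refine HasDerivAt.fun_sum fun l _ => ?_
    rcases eq_or_ne l i with rfl | hl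
    · simpa using hnum
    · simpa [hl] using hasDerivAt_const (x i) (a l * exp (x l + c l))
  have hquot : HasDerivAt (fun t => a i * exp (t + c i) / ∑ l, a l * exp (update x i t l + c l))
      ((N * M - N * N) / M ^ 2) (x i) := by
    have h := hnum.fun_div hden (by simpa using hM.ne')
    simp only [update_eq_self] at h
    exact h
  convert hquot using 1
  show N / M * (1 - N / M) = _
  field_simp

end Logit

section Mixture

variable {ι κ : Type*} [Fintype ι] [Fintype κ]

noncomputable def mixtureShare (d : κ → ℝ) (a c : κ → ι → ℝ) (x : ι → ℝ) (i : ι) : ℝ :=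
  ∑ k, d k * logitProb (a k) (c k) x i

variable {d : κ → ℝ} {a c : κ → ι → ℝ}

lemma mixtureShare_pos (hd0 : ∀ k, 0 ≤ d k) (hd1 : ∑ k, d k = 1) (ha : ∀ k l, 0 < a k l)
    (x : ι → ℝ) (i : ι) : 0 < mixtureShare d a c x i := by
  obtain ⟨k, -, hk⟩ : ∃ k ∈ univ, (0 : κ → ℝ) k < d k :=
    exists_lt_of_sum_lt (by simp [hd1])
  exact sum_pos' (fun k _ => mul_nonneg (hd0 k) (logitProb_pos (ha k) x i).le)
    ⟨k, mem_univ k, mul_pos hk (logitProb_pos (ha k) x i)⟩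

lemma hasDerivAt_mixtureShare_update [DecidableEq ι] (ha : ∀ k l, 0 < a k l) (x : ι → ℝ)
    (i : ι) :
    HasDerivAt (fun t => mixtureShare d a c (update x i t) i)
      (∑ k, d k * logitProb (a k) (c k) x i * (1 - logitProb (a k) (c k) x i)) (x i) := by
  simp only [mul_assoc]
  exact HasDerivAt.fun_sum fun k _ => (hasDerivAt_logitProb_update (ha k) x i).const_mul (d k)

end Mixture

lemma Finset.sum_mul_mul_one_sub_le {κ : Type*} (s : Finset κ) {d p : κ → ℝ}
    (hd : ∀ k ∈ s, 0 ≤ d k) : ∑ k ∈ s, d k * p k * (1 - p k) ≤ ∑ k ∈ s, d k * p k :=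
  sum_le_sum fun k hk => by nlinarith [mul_nonneg (hd k hk) (sq_nonneg (p k))]

theorem stmt_1_general
    (n K : ℕ)
    (d : Fin K → ℝ) (hd0 : ∀ k, 0 ≤ d k) (hd1 : ∑ k, d k = 1)
    (P : Fin K → Fin (n + 1) → ℝ)
    (hP0 : ∀ k j, 0 < P k j)
    (u : Fin (n + 1) → Fin K → ℝ)
    (ms : Fin (n + 1) → ℝ)
    (Pcond : (Fin n → ℝ) → Fin K → Fin (n + 1) → ℝ)
    (hPcond : ∀ δ k j, Pcond δ k j =
      P k j * Real.exp ((Fin.snoc δ 0 : Fin (n + 1) → ℝ) j + u j k) /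
        ∑ l, P k l * Real.exp ((Fin.snoc δ 0 : Fin (n + 1) → ℝ) l + u l k))
    (msStar : (Fin n → ℝ) → Fin (n + 1) → ℝ)
    (hmsStar : ∀ δ j, msStar δ j = ∑ k, d k * Pcond δ k j)
    (T : (Fin n → ℝ) → Fin n → ℝ)
    (hT : ∀ δ j, T δ j = δ j + Real.log (ms j.castSucc) - Real.log (msStar δ j.castSucc)) :
    ∀ (δ : Fin n → ℝ) (j : Fin n),
      HasDerivAt (fun t : ℝ => T (Function.update δ j t) j)
        (1 - (1 / msStar δ j.castSucc) *
          ∑ k, d k * Pcond δ k j.castSucc * (1 - Pcond δ k j.castSucc)) (δ j) ∧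
      0 ≤ 1 - (1 / msStar δ j.castSucc) *
          ∑ k, d k * Pcond δ k j.castSucc * (1 - Pcond δ k j.castSucc) := by
  intro δ j
  set c : Fin K → Fin (n + 1) → ℝ := fun k l => u l k
  have hPcond' : ∀ δ k, Pcond δ k = logitProb (P k) (c k) (Fin.snoc δ 0) :=
    fun δ k => funext (hPcond δ k)
  have hmsStar' : ∀ δ, msStar δ = mixtureShare d P c (Fin.snoc δ 0) := fun δ =>
    funext fun i => by simp only [hmsStar, hPcond', mixtureShare]
  set w : Fin (n + 1) → ℝ := Fin.snoc δ 0
  have hline : (fun t => T (update δ j t) j) = fun t =>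
      t + log (ms j.castSucc) - log (mixtureShare d P c (update w j.castSucc t) j.castSucc) := by
    funext t
    rw [hT, hmsStar', Fin.snoc_update, update_self]
  have hwj : w j.castSucc = δ j := Fin.snoc_castSucc ..
  have hm := mixtureShare_pos (c := c) hd0 hd1 hP0 w j.castSucc
  have hlog := (hasDerivAt_mixtureShare_update (d := d) (c := c) hP0 w j.castSucc).log
    (by simpa using hm.ne')
  simp only [update_eq_self] at hlog
  simp only [hPcond', hmsStar', ← hwj, hline]
  constructor
  · refine (((hasDerivAt_id' (w j.castSucc)).add_const (log (ms j.castSucc))).fun_sub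
      hlog).congr_deriv ?_
    ring
  · rw [sub_nonneg, one_div_mul_eq_div, div_le_one hm]
    exact sum_mul_mul_one_sub_le _ fun k _ => hd0 k

/-- Diagonal-derivative step in the proof of Lemma 2: for every `δ` and every inside
good `j`, the partial derivative of `T_j` with respect to `δ_j` exists, equals
`1 - (1/ms*_j(δ)) · Σ_k d_k 𝒫^k_j(δ)(1 - 𝒫^k_j(δ))`, and is nonnegative. -/
theorem stmt_1
    (n K : ℕ) (hn : 1 ≤ n) (hK : 1 ≤ K)
    (d : Fin K → ℝ) (hd0 : ∀ k, 0 ≤ d k) (hd1 : ∑ k, d k = 1)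
    (P : Fin K → Fin (n + 1) → ℝ)
    (hP0 : ∀ k j, 0 < P k j) (hP1 : ∀ k, ∑ j, P k j = 1)
    (u : Fin (n + 1) → Fin K → ℝ) (hu : ∀ k, u (Fin.last n) k = 0)
    (ms : Fin (n + 1) → ℝ) (hms0 : ∀ j, 0 < ms j) (hms1 : ∑ j, ms j = 1)
    (Pcond : (Fin n → ℝ) → Fin K → Fin (n + 1) → ℝ)
    (hPcond : ∀ δ k j, Pcond δ k j =
      P k j * Real.exp ((Fin.snoc δ 0 : Fin (n + 1) → ℝ) j + u j k) /
        ∑ l, P k l * Real.exp ((Fin.snoc δ 0 : Fin (n + 1) → ℝ) l + u l k))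
    (msStar : (Fin n → ℝ) → Fin (n + 1) → ℝ)
    (hmsStar : ∀ δ j, msStar δ j = ∑ k, d k * Pcond δ k j)
    (T : (Fin n → ℝ) → Fin n → ℝ)
    (hT : ∀ δ j, T δ j = δ j + Real.log (ms j.castSucc) - Real.log (msStar δ j.castSucc)) :
    ∀ (δ : Fin n → ℝ) (j : Fin n),
      HasDerivAt (fun t : ℝ => T (Function.update δ j t) j)
        (1 - (1 / msStar δ j.castSucc) *
          ∑ k, d k * Pcond δ k j.castSucc * (1 - Pcond δ k j.castSucc)) (δ j) ∧
      0 ≤ 1 - (1 / msStar δ j.castSucc) *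
          ∑ k, d k * Pcond δ k j.castSucc * (1 - Pcond δ k j.castSucc) :=
  stmt_1_general n K d hd0 hd1 P hP0 u ms Pcond hPcond msStar hmsStar T hT
end

section
/- For every δ ∈ ℝ^{J−1} and every j ∈ {1,…,J−1}, the map T is bounded below coordinate-wise: T_j(δ) ≥ log ms_j − log( Σ_{k=1}^K d_k (P^k_j / P^k_J) e^{u_{jk}} ). -/
/-- Lower bound step in the proof of Lemma 2 (condition 2 of the BLP contraction
theorem): `T_j(δ) ≥ log ms_j − log( Σ_k d_k (P^k_j / P^k_J) e^{u_{jk}} )` for every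
`δ` and every inside good `j`. -/
theorem stmt_4
    (n K : ℕ) (hn : 1 ≤ n) (hK : 1 ≤ K)
    (d : Fin K → ℝ) (hd0 : ∀ k, 0 ≤ d k) (hd1 : ∑ k, d k = 1)
    (P : Fin K → Fin (n + 1) → ℝ)
    (hP0 : ∀ k j, 0 < P k j) (hP1 : ∀ k, ∑ j, P k j = 1)
    (u : Fin (n + 1) → Fin K → ℝ) (hu : ∀ k, u (Fin.last n) k = 0)
    (ms : Fin (n + 1) → ℝ) (hms0 : ∀ j, 0 < ms j) (hms1 : ∑ j, ms j = 1)
    (Pcond : (Fin n → ℝ) → Fin K → Fin (n + 1) → ℝ)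
    (hPcond : ∀ δ k j, Pcond δ k j =
      P k j * Real.exp ((Fin.snoc δ 0 : Fin (n + 1) → ℝ) j + u j k) /
        ∑ l, P k l * Real.exp ((Fin.snoc δ 0 : Fin (n + 1) → ℝ) l + u l k))
    (msStar : (Fin n → ℝ) → Fin (n + 1) → ℝ)
    (hmsStar : ∀ δ j, msStar δ j = ∑ k, d k * Pcond δ k j)
    (T : (Fin n → ℝ) → Fin n → ℝ)
    (hT : ∀ δ j, T δ j = δ j + Real.log (ms j.castSucc) - Real.log (msStar δ j.castSucc)) :
    ∀ (δ : Fin n → ℝ) (j : Fin n),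
      T δ j ≥ Real.log (ms j.castSucc) -
        Real.log (∑ k, d k * (P k j.castSucc / P k (Fin.last n)) *
          Real.exp (u j.castSucc k)) := by
  intro δ j
  set S := ∑ k, d k * (P k j.castSucc / P k (Fin.last n)) * Real.exp (u j.castSucc k) with hS
  have hdk : ∃ k, 0 < d k := by
    by_contra h
    push_neg at h
    have hz : ∀ k, d k = 0 := fun k => le_antisymm (h k) (hd0 k)
    simp [hz] at hd1
  obtain ⟨k0, hk0⟩ := hdk
  have hDpos : ∀ k, 0 < ∑ l, P k l * Real.exp ((Fin.snoc δ 0 : Fin (n + 1) → ℝ) l + u l k) := by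
    intro k
    apply Finset.sum_pos
    · intro l _
      have := hP0 k l
      positivity
    · exact Finset.univ_nonempty
  have hPc_pos : ∀ k, 0 < Pcond δ k j.castSucc := by
    intro k
    rw [hPcond]
    have h1 := hP0 k j.castSucc
    have h2 := hDpos k
    positivity
  have hPc_le : ∀ k, Pcond δ k j.castSucc ≤
      (P k j.castSucc / P k (Fin.last n)) * Real.exp (u j.castSucc k) * Real.exp (δ j) := by
    intro k
    rw [hPcond]
    have hD : P k (Fin.last n) ≤ ∑ l, P k l * Real.exp ((Fin.snoc δ 0 : Fin (n + 1) → ℝ) l + u l k) := by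
      have := Finset.single_le_sum
        (f := fun l => P k l * Real.exp ((Fin.snoc δ 0 : Fin (n + 1) → ℝ) l + u l k))
        (fun l _ => by have := hP0 k l; positivity) (Finset.mem_univ (Fin.last n))
      simpa [Fin.snoc_last, hu k] using this
    have hnum : 0 ≤ P k j.castSucc * Real.exp ((Fin.snoc δ 0 : Fin (n + 1) → ℝ) j.castSucc + u j.castSucc k) := by
      have := hP0 k j.castSucc; positivity
    calc P k j.castSucc * Real.exp ((Fin.snoc δ 0 : Fin (n + 1) → ℝ) j.castSucc + u j.castSucc k) /
          (∑ l, P k l * Real.exp ((Fin.snoc δ 0 : Fin (n + 1) → ℝ) l + u l k))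
        ≤ P k j.castSucc * Real.exp ((Fin.snoc δ 0 : Fin (n + 1) → ℝ) j.castSucc + u j.castSucc k) /
          P k (Fin.last n) := by
          exact div_le_div_of_nonneg_left hnum (hP0 k (Fin.last n)) hD
      _ = (P k j.castSucc / P k (Fin.last n)) * Real.exp (u j.castSucc k) * Real.exp (δ j) := by
          rw [Fin.snoc_castSucc, Real.exp_add]
          ring
  have hmsPos : 0 < msStar δ j.castSucc := by
    rw [hmsStar]
    apply Finset.sum_pos'
    · intro k _
      exact mul_nonneg (hd0 k) (hPc_pos k).le
    · exact ⟨k0, Finset.mem_univ k0, mul_pos hk0 (hPc_pos k0)⟩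
  have hSpos : 0 < S := by
    rw [hS]
    apply Finset.sum_pos'
    · intro k _
      have h1 := (hP0 k j.castSucc).le
      have h2 := hP0 k (Fin.last n)
      have := hd0 k
      positivity
    · refine ⟨k0, Finset.mem_univ k0, ?_⟩
      have h1 := hP0 k0 j.castSucc
      have h2 := hP0 k0 (Fin.last n)
      positivity
  have hmsLe : msStar δ j.castSucc ≤ S * Real.exp (δ j) := by
    rw [hmsStar, hS, Finset.sum_mul]
    apply Finset.sum_le_sum
    intro k _
    calc d k * Pcond δ k j.castSucc
        ≤ d k * ((P k j.castSucc / P k (Fin.last n)) * Real.exp (u j.castSucc k) * Real.exp (δ j)) :=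
          mul_le_mul_of_nonneg_left (hPc_le k) (hd0 k)
      _ = d k * (P k j.castSucc / P k (Fin.last n)) * Real.exp (u j.castSucc k) * Real.exp (δ j) := by ring
  have hlog : Real.log (msStar δ j.castSucc) ≤ Real.log S + δ j := by
    have := Real.log_le_log hmsPos hmsLe
    rwa [Real.log_mul (ne_of_gt hSpos) (Real.exp_ne_zero _), Real.log_exp] at this
  rw [hT]
  linarith
end

section
/- Let J ≥ 1 and let G be a probability measure on ℝ^J with ∫ max_{j=1,…,J} |v_j| dG(v) < ∞. Let P⁰ belong to the simplex Δ with P⁰_j > 0 for every j. Then P⁰ maximizes f(P) := ∫ log( Σ_{j=1}^J P_j e^{v_j} ) dG(v) over Δ if and only if the first-order condition ∫ e^{v_j} / ( Σ_{l=1}^J P⁰_l e^{v_l} ) dG(v) = 1 holds for every j = 1,…,J. -/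
/-!
Write `S_P(v) = ∑ⱼ Pⱼ e^{vⱼ}` and `rⱼ(v) = e^{vⱼ} / S_{P⁰}(v)`, so that `∑ⱼ P⁰ⱼ rⱼ = 1` pointwise.
Since `|log S_P(v)| ≤ maxⱼ |vⱼ|` on the simplex and `0 ≤ rⱼ ≤ 1 / P⁰ⱼ`, every integral involved
is finite.

Sufficiency: `log x ≤ x - 1` at `x = S_P / S_{P⁰} = ∑ⱼ Pⱼ rⱼ` gives
`f P ≤ f P⁰ + ∑ⱼ Pⱼ ∫ rⱼ - 1`, and the right-hand side is `f P⁰` under the first-order condition.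

Necessity: on the segment from `P⁰` to the vertex `eₖ`,
`f ((1 - t) P⁰ + t eₖ) - f P⁰ = ∫ log (1 + t (rₖ - 1))`, and `log (1 + y) = y + O(y²)` turns
`≤ 0` for small `t > 0` into `∫ rₖ ≤ 1`. As `∑ₖ P⁰ₖ ∫ rₖ = 1` with positive weights summing to
one, all these inequalities are equalities.
-/

open MeasureTheory Real Filter Topology

theorem abs_log_one_add_sub_le {y : ℝ} (hy : |y| ≤ 1 / 2) : |log (1 + y) - y| ≤ 2 * y ^ 2 := by
  have h := abs_log_sub_add_sum_range_le (x := -y) (by rw [abs_neg]; linarith) 1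
  simp only [Finset.sum_range_one, abs_neg, sub_neg_eq_add] at h
  have hpos : 0 < 1 - |y| := by linarith
  calc |log (1 + y) - y| = |-y + log (1 + y)| := by ring_nf
    _ ≤ |y| ^ 2 / (1 - |y|) := by simpa using h
    _ ≤ 2 * y ^ 2 := by
      rw [div_le_iff₀ hpos, sq_abs]
      nlinarith [sq_nonneg y]

theorem integral_nonpos_of_integral_log_one_add_mul_nonpos {α : Type*} [MeasurableSpace α]
    {μ : Measure α} [IsFiniteMeasure μ] {u : α → ℝ} {C : ℝ} (hu : Integrable u μ)
    (hC : ∀ x, |u x| ≤ C) (h : ∀ᶠ t in 𝓝[>] 0, ∫ x, log (1 + t * u x) ∂μ ≤ 0) :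
    ∫ x, u x ∂μ ≤ 0 := by
  set c := 2 * C ^ 2 * μ.real Set.univ
  have hsmall : ∀ᶠ t in 𝓝[>] (0 : ℝ), t * C < 1 / 2 :=
    (((continuous_id.mul continuous_const).tendsto' 0 0 (zero_mul C)).mono_left
      nhdsWithin_le_nhds).eventually_lt_const (by norm_num)
  have hlin : Tendsto (fun t => c * t) (𝓝[>] 0) (𝓝 0) :=
    ((continuous_const.mul continuous_id).tendsto' 0 0 (mul_zero c)).mono_left nhdsWithin_le_nhds
  refine ge_of_tendsto hlin ?_
  filter_upwards [h, hsmall, self_mem_nhdsWithin] with t ht htC (htpos : 0 < t)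
  have hy : ∀ x, |t * u x| ≤ t * C := fun x => by
    rw [abs_mul, abs_of_pos htpos]; exact mul_le_mul_of_nonneg_left (hC x) htpos.le
  have hTaylor : ∀ x, |log (1 + t * u x) - t * u x| ≤ 2 * t ^ 2 * C ^ 2 := fun x => by
    calc |log (1 + t * u x) - t * u x|
        ≤ 2 * (t * u x) ^ 2 := abs_log_one_add_sub_le (by linarith [hy x])
      _ = 2 * |t * u x| ^ 2 := by rw [sq_abs]
      _ ≤ 2 * (t * C) ^ 2 := by gcongr; exact hy x
      _ = 2 * t ^ 2 * C ^ 2 := by ring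
  have hlogInt : Integrable (fun x => log (1 + t * u x)) μ := by
    refine (integrable_const (t * C + 2 * t ^ 2 * C ^ 2)).mono' ?_ ?_
    · exact (measurable_log.comp_aemeasurable
        (aemeasurable_const.add (aemeasurable_const.mul hu.aemeasurable))).aestronglyMeasurable
    · refine Eventually.of_forall fun x => ?_
      rw [Real.norm_eq_abs]
      linarith [abs_sub_abs_le_abs_sub (log (1 + t * u x)) (t * u x), hTaylor x, hy x]
  have hlower : t * ∫ x, u x ∂μ - c * t ^ 2 ≤ ∫ x, log (1 + t * u x) ∂μ := by
    calc t * ∫ x, u x ∂μ - c * t ^ 2 = ∫ x, (t * u x - 2 * t ^ 2 * C ^ 2) ∂μ := by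
          rw [integral_sub (hu.const_mul t) (integrable_const _), integral_const_mul,
            integral_const, smul_eq_mul]
          ring
      _ ≤ ∫ x, log (1 + t * u x) ∂μ :=
          integral_mono ((hu.const_mul t).sub (integrable_const _)) hlogInt
            fun x => by linarith [(abs_le.1 (hTaylor x)).1]
  nlinarith

section Simplex

variable {ι : Type*} [Fintype ι] {P : ι → ℝ}

theorem sum_mul_exp_pos_s9 (hP : P ∈ stdSimplex ℝ ι) (v : ι → ℝ) :
    0 < ∑ j, P j * exp (v j) := by
  obtain ⟨j, hj⟩ : ∃ j, 0 < P j := by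
    by_contra! h
    linarith [hP.2, Finset.sum_nonpos fun j (_ : j ∈ Finset.univ) => h j]
  exact Finset.sum_pos' (fun i _ => mul_nonneg (hP.1 i) (exp_pos _).le)
    ⟨j, Finset.mem_univ j, mul_pos hj (exp_pos _)⟩

theorem abs_log_sum_mul_exp_le (hP : P ∈ stdSimplex ℝ ι) {v : ι → ℝ} {m : ℝ}
    (hv : ∀ j, |v j| ≤ m) : |log (∑ j, P j * exp (v j))| ≤ m := by
  have hconst : ∀ c, ∑ j, P j * c = c := fun c => by rw [← Finset.sum_mul, hP.2, one_mul]
  have hlow : exp (-m) ≤ ∑ j, P j * exp (v j) := hconst (exp (-m)) ▸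
    Finset.sum_le_sum fun j _ => mul_le_mul_of_nonneg_left
      (exp_le_exp.2 (neg_le_of_abs_le (hv j))) (hP.1 j)
  have hup : ∑ j, P j * exp (v j) ≤ exp m := hconst (exp m) ▸
    Finset.sum_le_sum fun j _ => mul_le_mul_of_nonneg_left
      (exp_le_exp.2 (le_of_abs_le (hv j))) (hP.1 j)
  have hS := sum_mul_exp_pos_s9 hP v
  rw [abs_le, le_log_iff_exp_le hS, log_le_iff_le_exp hS]
  exact ⟨hlow, hup⟩

theorem exp_div_sum_mul_exp_le (hP : ∀ j, 0 ≤ P j) {k : ι} (hk : 0 < P k) (v : ι → ℝ) :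
    exp (v k) / ∑ j, P j * exp (v j) ≤ (P k)⁻¹ := by
  have hterm : P k * exp (v k) ≤ ∑ j, P j * exp (v j) :=
    Finset.single_le_sum (f := fun j => P j * exp (v j))
      (fun j _ => mul_nonneg (hP j) (exp_pos _).le) (Finset.mem_univ k)
  rw [div_le_iff₀ (lt_of_lt_of_le (by positivity) hterm), inv_mul_eq_div, le_div_iff₀ hk]
  linarith

theorem sum_mul_exp_smul_add_smul_single [DecidableEq ι] (P v : ι → ℝ) (t : ℝ) (k : ι) :
    ∑ j, ((1 - t) • P + t • Pi.single k 1 : ι → ℝ) j * exp (v j) =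
      (1 - t) * ∑ j, P j * exp (v j) + t * exp (v k) := by
  simp [add_mul, Finset.sum_add_distrib, Finset.mul_sum, mul_assoc, Pi.single_apply]

end Simplex

section Integrals

variable {ι : Type*} [Fintype ι] {G : Measure (ι → ℝ)} {P : ι → ℝ}

theorem integrable_log_sum_mul_exp {M : (ι → ℝ) → ℝ} (hM : Integrable M G)
    (hvM : ∀ v j, |v j| ≤ M v) (hP : P ∈ stdSimplex ℝ ι) :
    Integrable (fun v => log (∑ j, P j * exp (v j))) G :=
  hM.mono' (Continuous.log (by fun_prop) fun v => (sum_mul_exp_pos_s9 hP v).ne').aestronglyMeasurable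
    (Eventually.of_forall fun v => abs_log_sum_mul_exp_le hP (hvM v))

theorem integrable_exp_div_sum_mul_exp [IsFiniteMeasure G] (hP : P ∈ stdSimplex ℝ ι) {k : ι}
    (hk : 0 < P k) : Integrable (fun v => exp (v k) / ∑ j, P j * exp (v j)) G := by
  refine (integrable_const (P k)⁻¹).mono' ?_ (Eventually.of_forall fun v => ?_)
  · exact (Continuous.div (by fun_prop) (by fun_prop)
      fun v => (sum_mul_exp_pos_s9 hP v).ne').aestronglyMeasurable
  · rw [norm_of_nonneg (div_nonneg (exp_pos _).le (sum_mul_exp_pos_s9 hP v).le)]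
    exact exp_div_sum_mul_exp_le hP.1 hk v

theorem sum_mul_integral_exp_div_sum_mul_exp [IsProbabilityMeasure G] (hP : P ∈ stdSimplex ℝ ι)
    (hpos : ∀ j, 0 < P j) :
    ∑ j, P j * ∫ v, exp (v j) / (∑ l, P l * exp (v l)) ∂G = 1 := by
  simp_rw [← integral_const_mul]
  rw [← integral_finsetSum _ fun j _ => (integrable_exp_div_sum_mul_exp hP (hpos j)).const_mul _]
  simp_rw [mul_div_assoc', ← Finset.sum_div]
  simp [div_self (sum_mul_exp_pos_s9 hP _).ne']

theorem integral_log_sum_mul_exp_le [IsProbabilityMeasure G] {M : (ι → ℝ) → ℝ}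
    (hM : Integrable M G) (hvM : ∀ v j, |v j| ≤ M v) {Q : ι → ℝ} (hQ : Q ∈ stdSimplex ℝ ι)
    (hP : P ∈ stdSimplex ℝ ι) (hpos : ∀ j, 0 < P j) :
    ∫ v, log (∑ j, Q j * exp (v j)) ∂G ≤ ∫ v, log (∑ j, P j * exp (v j)) ∂G +
      (∑ j, Q j * ∫ v, exp (v j) / (∑ l, P l * exp (v l)) ∂G - 1) := by
  have hratio := fun j => (integrable_exp_div_sum_mul_exp (G := G) hP (hpos j)).const_mul (Q j)
  have hsum : Integrable (fun v => ∑ j, Q j * (exp (v j) / ∑ l, P l * exp (v l))) G :=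
    integrable_finsetSum _ fun j _ => hratio j
  have hrestInt : Integrable
      (fun v => ∑ j, Q j * (exp (v j) / ∑ l, P l * exp (v l)) - 1) G :=
    hsum.sub (integrable_const 1)
  have hpt : ∀ v : ι → ℝ, log (∑ j, Q j * exp (v j)) ≤ log (∑ j, P j * exp (v j)) +
      (∑ j, Q j * (exp (v j) / ∑ l, P l * exp (v l)) - 1) := by
    intro v
    rw [← sub_le_iff_le_add', ← log_div (sum_mul_exp_pos_s9 hQ v).ne' (sum_mul_exp_pos_s9 hP v).ne']
    simp_rw [mul_div_assoc', ← Finset.sum_div]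
    exact log_le_sub_one_of_pos (div_pos (sum_mul_exp_pos_s9 hQ v) (sum_mul_exp_pos_s9 hP v))
  have hrest : ∫ v, (∑ j, Q j * (exp (v j) / ∑ l, P l * exp (v l)) - 1) ∂G =
      ∑ j, Q j * ∫ v, exp (v j) / (∑ l, P l * exp (v l)) ∂G - 1 := by
    rw [integral_sub hsum (integrable_const 1), integral_finsetSum _ fun j _ => hratio j]
    simp only [integral_const_mul, integral_const, probReal_univ, smul_eq_mul, one_mul]
  calc ∫ v, log (∑ j, Q j * exp (v j)) ∂G
      ≤ ∫ v, (log (∑ j, P j * exp (v j)) +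
          (∑ j, Q j * (exp (v j) / ∑ l, P l * exp (v l)) - 1)) ∂G :=
        integral_mono (integrable_log_sum_mul_exp hM hvM hQ)
          ((integrable_log_sum_mul_exp hM hvM hP).add hrestInt) hpt
    _ = _ := by rw [integral_add (integrable_log_sum_mul_exp hM hvM hP) hrestInt, hrest]

theorem integral_exp_div_sum_mul_exp_le_one [IsProbabilityMeasure G] {M : (ι → ℝ) → ℝ}
    (hM : Integrable M G) (hvM : ∀ v j, |v j| ≤ M v) (hP : P ∈ stdSimplex ℝ ι)
    {k : ι} (hk : 0 < P k)
    (hmax : ∀ Q ∈ stdSimplex ℝ ι,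
      ∫ v, log (∑ j, Q j * exp (v j)) ∂G ≤ ∫ v, log (∑ j, P j * exp (v j)) ∂G) :
    ∫ v, exp (v k) / (∑ j, P j * exp (v j)) ∂G ≤ 1 := by
  classical
  set r := fun v : ι → ℝ => exp (v k) / ∑ j, P j * exp (v j)
  have hr : Integrable r G := integrable_exp_div_sum_mul_exp hP hk
  have hbound : ∀ v, |r v - 1| ≤ (P k)⁻¹ + 1 := fun v => by
    have h0 : 0 ≤ r v := div_nonneg (exp_pos _).le (sum_mul_exp_pos_s9 hP v).le
    have h1 : r v ≤ (P k)⁻¹ := exp_div_sum_mul_exp_le hP.1 hk v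
    rw [abs_le]; constructor <;> linarith [inv_pos.2 hk]
  have hdir : ∀ᶠ t in 𝓝[>] 0, ∫ v, log (1 + t * (r v - 1)) ∂G ≤ 0 := by
    filter_upwards [Ioo_mem_nhdsGT one_pos] with t ⟨ht0, ht1⟩
    have hQ : (1 - t) • P + t • Pi.single k 1 ∈ stdSimplex ℝ ι :=
      convex_stdSimplex ℝ ι hP (single_mem_stdSimplex ℝ k) (by linarith) ht0.le (by ring)
    have hlog : ∀ v, log (1 + t * (r v - 1)) =
        log (∑ j, ((1 - t) • P + t • Pi.single k 1 : ι → ℝ) j * exp (v j)) -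
          log (∑ j, P j * exp (v j)) := fun v => by
      have hS := sum_mul_exp_pos_s9 hP v
      rw [← log_div (sum_mul_exp_pos_s9 hQ v).ne' hS.ne', sum_mul_exp_smul_add_smul_single]
      congr 1
      simp only [r]
      field_simp
      ring
    simp_rw [hlog]
    rw [integral_sub (integrable_log_sum_mul_exp hM hvM hQ) (integrable_log_sum_mul_exp hM hvM hP)]
    linarith [hmax _ hQ]
  have := integral_nonpos_of_integral_log_one_add_mul_nonpos (u := fun v => r v - 1)
    (hr.sub (integrable_const 1)) hbound hdir
  rw [integral_sub hr (integrable_const 1)] at this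
  simpa using this

end Integrals

theorem stmt_9_general
    (J : ℕ)
    (hne : (Finset.univ : Finset (Fin J)).Nonempty)
    (G : Measure (Fin J → ℝ)) [IsProbabilityMeasure G]
    (hint : Integrable (fun v : Fin J → ℝ => Finset.univ.sup' hne fun j => |v j|) G)
    (Δ : Set (Fin J → ℝ))
    (hΔ : Δ = {P | (∀ j, 0 ≤ P j) ∧ ∑ j, P j = 1})
    (f : (Fin J → ℝ) → ℝ)
    (hf : ∀ P, f P = ∫ v, Real.log (∑ j, P j * Real.exp (v j)) ∂G)
    (P0 : Fin J → ℝ) (hP0Δ : P0 ∈ Δ) (hP0pos : ∀ j, 0 < P0 j) :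
    (∀ P ∈ Δ, f P ≤ f P0) ↔
      ∀ j, ∫ v, Real.exp (v j) / ∑ l, P0 l * Real.exp (v l) ∂G = 1 := by
  obtain rfl : Δ = stdSimplex ℝ (Fin J) := hΔ
  have hvM : ∀ (v : Fin J → ℝ) j, |v j| ≤ Finset.univ.sup' hne fun j => |v j| :=
    fun v j => Finset.le_sup' (fun j => |v j|) (Finset.mem_univ j)
  simp only [hf]
  constructor
  · intro hmax j
    have hle : ∀ j, ∫ v, exp (v j) / ∑ l, P0 l * exp (v l) ∂G ≤ 1 :=
      fun j => integral_exp_div_sum_mul_exp_le_one hint hvM hP0Δ (hP0pos j) hmax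
    have heq := (Finset.sum_eq_sum_iff_of_le fun j _ =>
      mul_le_mul_of_nonneg_left (hle j) (hP0pos j).le).1
      (by rw [sum_mul_integral_exp_div_sum_mul_exp hP0Δ hP0pos]; simpa using hP0Δ.2.symm)
    exact mul_left_cancel₀ (hP0pos j).ne' (by simpa using heq j (Finset.mem_univ j))
  · intro hfoc P hP
    simpa [hfoc, hP.2] using integral_log_sum_mul_exp_le hint hvM hP hP0Δ hP0pos

/-- The optimality-constraint moment condition (16) in Proposition 2 of the paper:
an interior point `P⁰` of the simplex maximizes the rational inattention objective
`f(P) = ∫ log(Σ_j P_j e^{v_j}) dG(v)` over the simplex if and only if the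
first-order condition `∫ e^{v_j} / Σ_l P⁰_l e^{v_l} dG(v) = 1` holds for every `j`. -/
theorem stmt_9
    (J : ℕ) (hJ : 1 ≤ J)
    (hne : (Finset.univ : Finset (Fin J)).Nonempty)
    (G : Measure (Fin J → ℝ)) [IsProbabilityMeasure G]
    (hint : Integrable (fun v : Fin J → ℝ => Finset.univ.sup' hne fun j => |v j|) G)
    (Δ : Set (Fin J → ℝ))
    (hΔ : Δ = {P | (∀ j, 0 ≤ P j) ∧ ∑ j, P j = 1})
    (f : (Fin J → ℝ) → ℝ)
    (hf : ∀ P, f P = ∫ v, Real.log (∑ j, P j * Real.exp (v j)) ∂G)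
    (P0 : Fin J → ℝ) (hP0Δ : P0 ∈ Δ) (hP0pos : ∀ j, 0 < P0 j) :
    (∀ P ∈ Δ, f P ≤ f P0) ↔
      ∀ j, ∫ v, Real.exp (v j) / ∑ l, P0 l * Real.exp (v l) ∂G = 1 :=
  stmt_9_general J hne G hint Δ hΔ f hf P0 hP0Δ hP0pos
end
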